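/- Consider the equation E : 2x − 2y + z = 0 over [n], and define the coloring f : [n] → {−1, 1} by f(t) = −1 if t is even and t ≤ 3n/4, and f(t) = 1 otherwise. Then the total number of solutions in [n]³ is (3/8)n² + O(n), the number of monochromatic solutions under f is (5/64)n² + O(n), and consequently limsup_{n→∞} μ_E([n]) ≤ 5/24 < 1/4, so E is uncommon over [n]. -/

import Mathlib

open Finset Filter

/-- The set of solutions `(x, y, z) ∈ [n]³` to `a·x + b·y + c·z = 0`. -/
def solns (a b c : ℤ) (n : ℕ) : Finset (ℕ × ℕ × ℕ) :=
  ((Finset.Icc 1 n) ×ˢ (Finset.Icc 1 n) ×ˢ (Finset.Icc 1 n)).filter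
    fun p => a * (p.1 : ℤ) + b * (p.2.1 : ℤ) + c * (p.2.2 : ℤ) = 0

/-- The set of solutions that are monochromatic under the coloring `f`. -/
def mono (a b c : ℤ) (n : ℕ) (f : ℕ → Bool) : Finset (ℕ × ℕ × ℕ) :=
  (solns a b c n).filter fun p => f p.1 = f p.2.1 ∧ f p.1 = f p.2.2

/-- `μ_E([n])`: the minimum, over 2-colorings of `[n]`, of the proportion of
monochromatic solutions. -/
noncomputable def muMin (a b c : ℤ) (n : ℕ) : ℝ :=
  sInf {r : ℝ | ∃ f : ℕ → Bool,
    r = ((mono a b c n f).card : ℝ) / ((solns a b c n).card : ℝ)}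

/-- The coloring of `[n]` for `2x − 2y + z = 0`: `t` is blue (`false`, i.e. `−1`)
iff `t` is even and `t ≤ 3n/4`, red (`true`, i.e. `1`) otherwise. -/
def color1 (n : ℕ) : ℕ → Bool := fun t =>
  if t % 2 = 0 ∧ 4 * t ≤ 3 * n then false else true

/-!
Every solution of `2x − 2y + z = 0` in `[n]³` is `(x, x + d, 2d)` with `1 ≤ d ≤ n/2`,
`1 ≤ x ≤ n − d`, so there are `∑ (n − d) ≈ 3n²/8` of them. Fix `d`. If `2d` is blue
(`d ≤ 3n/8`), then `x` and `x + d` must both be blue, which needs `d` even and leaves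
`≈ (3n/4 − d)/2` values of `x`. If `2d` is red, then since every even `x ≤ n − d < 5n/8`
is blue, `x` must be odd; for even `d` that suffices (`≈ (n − d)/2` values), for odd `d`
the even number `x + d` must also exceed `3n/4` (`≈ n/8` values). Summing over `d` gives
`5n²/64` monochromatic solutions, and since `μ_E([n])` is at most the density for this
colouring, its limsup is at most `(5/64)/(3/8) = 5/24`.
-/

open Topology

lemma card_filter_odd_Ioc {L M : ℕ} (h : L ≤ M) :
    #{x ∈ Ioc L M | x % 2 = 1} = (M + 1) / 2 - (L + 1) / 2 := by
  induction M, h using Nat.le_induction with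
  | base => simp
  | succ M hLM ih =>
    rw [← insert_Ioc_right_eq_Ioc_add_one hLM, filter_insert]
    split_ifs
    · rw [card_insert_of_notMem (by simp)]; omega
    · omega

lemma card_filter_even_Icc (M : ℕ) : #{x ∈ Icc 1 M | x % 2 = 0} = M / 2 := by
  induction M with
  | zero => simp
  | succ M ih =>
    rw [← insert_Icc_right_eq_Icc_add_one (by omega), filter_insert]
    split_ifs
    · rw [card_insert_of_notMem (by simp)]; omega
    · omega

lemma sum_Icc_one_cast_mul_two (m : ℕ) : (∑ e ∈ Icc 1 m, (e : ℤ)) * 2 = m * (m + 1) := by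
  induction m with
  | zero => simp
  | succ m ih => rw [sum_Icc_succ_top (by omega), add_mul, ih]; push_cast; ring

lemma sum_Icc_one_eq_sum_even_add_sum_odd {M : Type*} [AddCommMonoid M] (m : ℕ) (f : ℕ → M) :
    ∑ d ∈ Icc 1 m, f d =
      ∑ e ∈ Icc 1 (m / 2), f (2 * e) + ∑ d ∈ Icc 1 m with d % 2 = 1, f d := by
  have hEven : {d ∈ Icc 1 m | d % 2 = 0} =
      (Icc 1 (m / 2)).map ⟨(2 * ·), mul_right_injective₀ two_ne_zero⟩ := by
    ext d; simp only [mem_filter, mem_Icc, Finset.mem_map, Function.Embedding.coeFn_mk]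
    constructor
    · intro h; exact ⟨d / 2, by omega, by omega⟩
    · rintro ⟨e, he, rfl⟩; omega
  rw [← sum_filter_add_sum_filter_not (Icc 1 m) (· % 2 = 0), hEven, sum_map]
  simp only [Function.Embedding.coeFn_mk, Nat.mod_two_ne_zero]

-- Since `z = 2 (y - x)`, a solution is determined by `x` and `d = y - x`.
lemma card_filter_solns_two_neg_two_one (n : ℕ) (P : ℕ × ℕ × ℕ → Prop)
    [DecidablePred P] :
    #{p ∈ solns 2 (-2) 1 n | P p} =
      ∑ d ∈ Icc 1 (n / 2), #{x ∈ Icc 1 (n - d) | P (x, x + d, 2 * d)} := by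
  rw [← card_sigma]
  refine card_nbij' (fun p => ⟨p.2.2 / 2, p.1⟩) (fun q => (q.2, q.2 + q.1, 2 * q.1)) ?_ ?_ ?_ ?_
  · rintro ⟨x, y, z⟩ hp
    simp only [solns, coe_filter, Set.mem_ofPred_eq, mem_filter, mem_product, mem_Icc] at hp
    obtain ⟨⟨⟨⟨hx1, hx2⟩, ⟨hy1, hy2⟩, hz1, hz2⟩, heq⟩, hP⟩ := hp
    have hyz : x + z / 2 = y ∧ 2 * (z / 2) = z := by omega
    simp only [coe_sigma, Set.mem_sigma_iff, coe_Icc, Set.mem_Icc, coe_filter, Set.mem_ofPred_eq,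
      hyz, mem_Icc]
    exact ⟨⟨by omega, by omega⟩, ⟨by omega, by omega⟩, hP⟩
  · rintro ⟨d, x⟩ hq
    simp only [coe_sigma, Set.mem_sigma_iff, coe_Icc, Set.mem_Icc, coe_filter, Set.mem_ofPred_eq,
      mem_Icc] at hq
    simp only [solns, coe_filter, Set.mem_ofPred_eq, mem_filter, mem_product, mem_Icc]
    refine ⟨⟨by omega, by push_cast; ring⟩, hq.2.2⟩
  · rintro ⟨x, y, z⟩ hp
    simp only [solns, coe_filter, Set.mem_ofPred_eq, mem_filter, mem_product, mem_Icc] at hp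
    simp only [Prod.mk.injEq, true_and]
    omega
  · rintro ⟨d, x⟩ -
    simp

lemma card_solns_two_neg_two_one_mul_two (n : ℕ) :
    (#(solns 2 (-2) 1 n) : ℤ) * 2 =
      2 * (n / 2 : ℕ) * n - (n / 2 : ℕ) * ((n / 2 : ℕ) + 1) := by
  have hcard : #(solns 2 (-2) 1 n) = ∑ d ∈ Icc 1 (n / 2), (n - d) := by
    simpa using card_filter_solns_two_neg_two_one n fun _ => True
  rw [hcard, Nat.cast_sum,
    sum_congr rfl fun d hd => Nat.cast_sub (by simp only [mem_Icc] at hd; omega),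
    sum_sub_distrib, sub_mul, sum_Icc_one_cast_mul_two]
  simp only [sum_const, Nat.card_Icc, add_tsub_cancel_right, nsmul_eq_mul]
  ring

lemma abs_eight_mul_card_solns_two_neg_two_one_sub_le (n : ℕ) :
    |8 * (#(solns 2 (-2) 1 n) : ℤ) - 3 * (n : ℤ) ^ 2| ≤ 7 * (n : ℤ) := by
  have hcard := card_solns_two_neg_two_one_mul_two n
  rw [abs_le]
  obtain ⟨m, rfl | rfl⟩ := Nat.even_or_odd' n
  · rw [show 2 * m / 2 = m by omega] at hcard
    push_cast at hcard ⊢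
    constructor <;> nlinarith
  · rw [show (2 * m + 1) / 2 = m by omega] at hcard
    push_cast at hcard ⊢
    constructor <;> nlinarith

lemma color1_eq_color1_iff {n s t : ℕ} :
    color1 n s = color1 n t ↔
      (s % 2 = 0 ∧ 4 * s ≤ 3 * n ↔ t % 2 = 0 ∧ 4 * t ≤ 3 * n) := by
  unfold color1
  by_cases hs : s % 2 = 0 ∧ 4 * s ≤ 3 * n <;> by_cases ht : t % 2 = 0 ∧ 4 * t ≤ 3 * n <;>
    simp [hs, ht]

def monoCountAt (n d : ℕ) : ℕ :=
  #{x ∈ Icc 1 (n - d) | color1 n x = color1 n (x + d) ∧ color1 n x = color1 n (2 * d)}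

section monoCountAt

variable {n d : ℕ}

lemma monoCountAt_of_even_of_le (hd : 8 * d ≤ 3 * n) (he : d % 2 = 0) :
    monoCountAt n d = (3 * n / 4 - d) / 2 := by
  rw [monoCountAt, ← card_filter_even_Icc]
  congr 1
  ext x
  simp only [mem_filter, mem_Icc, color1_eq_color1_iff]
  omega

lemma monoCountAt_of_odd_of_le (hd : 8 * d ≤ 3 * n) (ho : d % 2 = 1) : monoCountAt n d = 0 := by
  rw [monoCountAt, card_eq_zero, filter_eq_empty_iff]
  simp only [mem_Icc, color1_eq_color1_iff]
  omega

lemma monoCountAt_of_even_of_lt (hd : 3 * n < 8 * d) (he : d % 2 = 0) :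
    monoCountAt n d = (n - d + 1) / 2 := by
  rw [monoCountAt, ← Nat.sub_zero ((n - d + 1) / 2), ← card_filter_odd_Ioc (Nat.zero_le _)]
  congr 1
  ext x
  simp only [mem_filter, mem_Icc, mem_Ioc, color1_eq_color1_iff]
  omega

lemma monoCountAt_of_odd_of_lt (hd : 3 * n < 8 * d) (ho : d % 2 = 1) :
    monoCountAt n d = (n - d + 1) / 2 - (3 * n / 4 - d + 1) / 2 := by
  rw [monoCountAt, ← card_filter_odd_Ioc (by omega)]
  congr 1
  ext x
  simp only [mem_filter, mem_Icc, mem_Ioc, color1_eq_color1_iff]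
  omega

end monoCountAt

/-- Eight times the main term of `monoCountAt n d`; the factor keeps it integral. -/
def monoApprox (n d : ℕ) : ℤ :=
  if 8 * d ≤ 3 * n then (if d % 2 = 0 then 3 * n - 4 * d else 0)
  else (if d % 2 = 0 then 4 * (n - d) else n)

lemma abs_eight_mul_monoCountAt_sub_monoApprox_le {n d : ℕ} (hdn : 2 * d ≤ n) :
    |8 * (monoCountAt n d : ℤ) - monoApprox n d| ≤ 24 := by
  rw [abs_le, monoApprox]
  split_ifs with hd he he
  · rw [monoCountAt_of_even_of_le hd he]; omega
  · rw [monoCountAt_of_odd_of_le hd (by omega)]; omega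
  · rw [monoCountAt_of_even_of_lt (by omega) he]; omega
  · rw [monoCountAt_of_odd_of_lt (by omega) (by omega)]; omega

lemma monoApprox_two_mul (n e : ℕ) :
    monoApprox n (2 * e) = 4 * (n - 2 * e) - if 16 * e ≤ 3 * n then (n : ℤ) else 0 := by
  unfold monoApprox
  split_ifs <;> omega

lemma monoApprox_of_odd {n d : ℕ} (ho : d % 2 = 1) :
    monoApprox n d = if 3 * n < 8 * d then (n : ℤ) else 0 := by
  unfold monoApprox
  split_ifs <;> omega

lemma sum_monoApprox (n : ℕ) :
    ∑ d ∈ Icc 1 (n / 2), monoApprox n d =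
      4 * (n / 4 : ℕ) * n - 4 * (n / 4 : ℕ) * ((n / 4 : ℕ) + 1) - (3 * n / 16 : ℕ) * n
        + ((n / 2 + 1) / 2 - (3 * n / 8 + 1) / 2 : ℕ) * n := by
  have hEven : ∑ e ∈ Icc 1 (n / 2 / 2), monoApprox n (2 * e) =
      4 * (n / 4 : ℕ) * n - 4 * (n / 4 : ℕ) * ((n / 4 : ℕ) + 1) - (3 * n / 16 : ℕ) * n := by
    have hBlue : {e ∈ Icc 1 (n / 4) | 16 * e ≤ 3 * n} = Icc 1 (3 * n / 16) := by
      ext e; simp only [mem_filter, mem_Icc]; omega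
    simp only [monoApprox_two_mul, sum_sub_distrib, ← sum_filter, show n / 2 / 2 = n / 4 by omega,
      hBlue, mul_sub, ← mul_sum, sum_const, Nat.card_Icc, add_tsub_cancel_right, nsmul_eq_mul]
    linear_combination (-4 : ℤ) * sum_Icc_one_cast_mul_two (n / 4)
  have hOdd : ∑ d ∈ Icc 1 (n / 2) with d % 2 = 1, monoApprox n d =
      ((n / 2 + 1) / 2 - (3 * n / 8 + 1) / 2 : ℕ) * n := by
    have hRed : {d ∈ Icc 1 (n / 2) | d % 2 = 1 ∧ 3 * n < 8 * d} =
        {d ∈ Ioc (3 * n / 8) (n / 2) | d % 2 = 1} := by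
      ext d; simp only [mem_filter, mem_Icc, mem_Ioc]; omega
    rw [sum_congr rfl fun d hd => monoApprox_of_odd (mem_filter.1 hd).2, ← sum_filter,
      filter_filter,       hRed, sum_const, card_filter_odd_Ioc (by omega), nsmul_eq_mul]
  rw [sum_Icc_one_eq_sum_even_add_sum_odd, hEven, hOdd]

lemma abs_eight_mul_sum_monoApprox_sub_le (n : ℕ) :
    |8 * ∑ d ∈ Icc 1 (n / 2), monoApprox n d - 5 * (n : ℤ) ^ 2| ≤ 50 * (n : ℤ) := by
  rw [sum_monoApprox]
  have ha : (n : ℤ) - 3 ≤ 4 * (n / 4 : ℕ) ∧ 4 * (n / 4 : ℕ) ≤ (n : ℤ) := by omega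
  have hb : 3 * (n : ℤ) - 15 ≤ 16 * (3 * n / 16 : ℕ) ∧
      16 * (3 * n / 16 : ℕ) ≤ 3 * (n : ℤ) := by omega
  have hq : (n : ℤ) - 40 ≤ 16 * ((n / 2 + 1) / 2 - (3 * n / 8 + 1) / 2 : ℕ) ∧
      16 * ((n / 2 + 1) / 2 - (3 * n / 8 + 1) / 2 : ℕ) ≤ (n : ℤ) + 40 := by omega
  generalize (n / 4 : ℕ) = a at *
  generalize (3 * n / 16 : ℕ) = b at *
  generalize ((n / 2 + 1) / 2 - (3 * n / 8 + 1) / 2 : ℕ) = q at *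
  have hn : (0 : ℤ) ≤ n := by positivity
  have ha0 : (0 : ℤ) ≤ a := by positivity
  rw [abs_le]
  constructor <;> nlinarith [mul_nonneg hn (sub_nonneg.2 ha.1), mul_nonneg hn (sub_nonneg.2 ha.2),
    mul_nonneg ha0 (sub_nonneg.2 ha.1), mul_nonneg ha0 (sub_nonneg.2 ha.2),
    mul_nonneg hn (sub_nonneg.2 hb.1), mul_nonneg hn (sub_nonneg.2 hb.2),
    mul_nonneg hn (sub_nonneg.2 hq.1), mul_nonneg hn (sub_nonneg.2 hq.2)]

lemma abs_sixtyfour_mul_card_mono_color1_sub_le (n : ℕ) :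
    |64 * (#(mono 2 (-2) 1 n (color1 n)) : ℤ) - 5 * (n : ℤ) ^ 2| ≤ 146 * (n : ℤ) := by
  have hcard : #(mono 2 (-2) 1 n (color1 n)) = ∑ d ∈ Icc 1 (n / 2), monoCountAt n d :=
    card_filter_solns_two_neg_two_one n _
  rw [hcard, Nat.cast_sum]
  set S := ∑ d ∈ Icc 1 (n / 2), (monoCountAt n d : ℤ)
  set T := ∑ d ∈ Icc 1 (n / 2), monoApprox n d
  have hST : |8 * S - T| ≤ 12 * (n : ℤ) :=
    calc |8 * S - T|
          = |∑ d ∈ Icc 1 (n / 2), (8 * (monoCountAt n d : ℤ) - monoApprox n d)| := by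
          rw [mul_sum, sum_sub_distrib]
      _ ≤ ∑ d ∈ Icc 1 (n / 2), |8 * (monoCountAt n d : ℤ) - monoApprox n d| :=
          abs_sum_le_sum_abs _ _
      _ ≤ ∑ d ∈ Icc 1 (n / 2), 24 := sum_le_sum fun d hd =>
          abs_eight_mul_monoCountAt_sub_monoApprox_le (by simp only [mem_Icc] at hd; omega)
      _ ≤ 12 * (n : ℤ) := by
          simp only [sum_const, Nat.card_Icc, add_tsub_cancel_right, nsmul_eq_mul]
          omega
  calc |64 * S - 5 * (n : ℤ) ^ 2| = |8 * (8 * S - T) + (8 * T - 5 * (n : ℤ) ^ 2)| := by ring_nf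
    _ ≤ 8 * (12 * (n : ℤ)) + 50 * n := by
        grw [abs_add_le, abs_mul, hST, abs_eight_mul_sum_monoApprox_sub_le n, Nat.abs_ofNat]
    _ = 146 * (n : ℤ) := by ring

lemma abs_natCast_sub_le_of_abs_intCast_sub_le {N n : ℕ} {p q C : ℤ} (hq : 0 < q)
    (h : |q * N - p * (n : ℤ) ^ 2| ≤ C * n) :
    |(N : ℝ) - p / q * (n : ℝ) ^ 2| ≤ C / q * n := by
  have hq' : (0 : ℝ) < q := by exact_mod_cast hq
  have h' : |(q : ℝ) * N - p * (n : ℝ) ^ 2| ≤ C * n := by exact_mod_cast h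
  rw [show (N : ℝ) - p / q * (n : ℝ) ^ 2 = (q * N - p * n ^ 2) / q by field_simp, abs_div,
    abs_of_pos hq', div_le_iff₀ hq']
  calc _ ≤ (C : ℝ) * n := h'
    _ = C / q * n * q := by field_simp

lemma tendsto_div_sq_of_abs_sub_le {u : ℕ → ℝ} {a C : ℝ}
    (hu : ∀ n : ℕ, |u n - a * (n : ℝ) ^ 2| ≤ C * n) :
    Tendsto (fun n : ℕ => u n / (n : ℝ) ^ 2) atTop (𝓝 a) := by
  have herr : Tendsto (fun n : ℕ => u n / (n : ℝ) ^ 2 - a) atTop (𝓝 0) := by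
    refine squeeze_zero_norm' ?_ (tendsto_const_div_atTop_nhds_zero_nat C)
    filter_upwards [eventually_gt_atTop 0] with n hn
    have hn' : (0 : ℝ) < n := by exact_mod_cast hn
    rw [Real.norm_eq_abs, show u n / (n : ℝ) ^ 2 - a = (u n - a * n ^ 2) / n ^ 2 by field_simp,
      abs_div, abs_of_pos (pow_pos hn' 2), div_le_div_iff₀ (pow_pos hn' 2) hn']
    nlinarith [mul_le_mul_of_nonneg_right (hu n) hn'.le]
  simpa using herr.add_const a

lemma tendsto_div_of_abs_sub_le {u v : ℕ → ℝ} {a b C D : ℝ} (hb : b ≠ 0)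
    (hu : ∀ n : ℕ, |u n - a * (n : ℝ) ^ 2| ≤ C * n)
    (hv : ∀ n : ℕ, |v n - b * (n : ℝ) ^ 2| ≤ D * n) :
    Tendsto (fun n => u n / v n) atTop (𝓝 (a / b)) := by
  refine ((tendsto_div_sq_of_abs_sub_le hu).div (tendsto_div_sq_of_abs_sub_le hv) hb).congr' ?_
  filter_upwards [eventually_gt_atTop 0] with n hn
  have hn' : (n : ℝ) ^ 2 ≠ 0 := by positivity
  rw [Pi.div_apply, div_div_div_cancel_right₀ hn']

lemma limsup_le_of_le_of_tendsto {μ r : ℕ → ℝ} {m L : ℝ} (hm : ∀ n, m ≤ μ n)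
    (hle : ∀ n, μ n ≤ r n) (hr : Tendsto r atTop (𝓝 L)) : limsup μ atTop ≤ L :=
  hr.limsup_eq ▸ limsup_le_limsup (Eventually.of_forall hle) (isCoboundedUnder_le_of_le atTop hm)
    hr.isBoundedUnder_le

section muMin

variable (a b c : ℤ) (n : ℕ)

lemma muMin_nonneg : 0 ≤ muMin a b c n :=
  le_csInf ⟨_, ⟨fun _ => true, rfl⟩⟩ (by rintro r ⟨f, rfl⟩; positivity)

lemma muMin_le (f : ℕ → Bool) : muMin a b c n ≤ #(mono a b c n f) / #(solns a b c n) :=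
  csInf_le ⟨0, by rintro r ⟨f, rfl⟩; positivity⟩ ⟨f, rfl⟩

end muMin

/-- For the equation `E : 2x − 2y + z = 0` over `[n]`, with the coloring
`f(t) = −1` iff `t` even and `t ≤ 3n/4`: the total number of solutions is
`(3/8)n² + O(n)`, the number of monochromatic solutions is `(5/64)n² + O(n)`, and
hence `limsup_{n→∞} μ_E([n]) ≤ 5/24 < 1/4`, so `E` is uncommon over `[n]`. -/
theorem two_two_one_uncommon :
    (∃ K : ℝ, ∀ n : ℕ,
      |((solns 2 (-2) 1 n).card : ℝ) - 3 / 8 * (n : ℝ) ^ 2| ≤ K * n) ∧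
    (∃ K : ℝ, ∀ n : ℕ,
      |((mono 2 (-2) 1 n (color1 n)).card : ℝ) - 5 / 64 * (n : ℝ) ^ 2| ≤ K * n) ∧
    limsup (fun n => muMin 2 (-2) 1 n) atTop ≤ 5 / 24 ∧
    (5 : ℝ) / 24 < 1 / 4 := by
  have hSolns (n : ℕ) := abs_natCast_sub_le_of_abs_intCast_sub_le (p := 3) (q := 8) (by norm_num)
    (abs_eight_mul_card_solns_two_neg_two_one_sub_le n)
  have hMono (n : ℕ) := abs_natCast_sub_le_of_abs_intCast_sub_le (p := 5) (q := 64) (by norm_num)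
    (abs_sixtyfour_mul_card_mono_color1_sub_le n)
  push_cast at hSolns hMono
  have hRatio := tendsto_div_of_abs_sub_le (by norm_num) hMono hSolns
  norm_num at hRatio
  exact ⟨⟨_, hSolns⟩, ⟨_, hMono⟩,
    limsup_le_of_le_of_tendsto (muMin_nonneg 2 (-2) 1) (fun n => muMin_le 2 (-2) 1 n (color1 n))
      hRatio,
    by norm_num⟩
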